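/- Let Φ : ℝⁿ → ℝ be a C³ convex function, i.e., Hess Φ(α) is positive semidefinite for every α ∈ ℝⁿ. Then for every fixed t ≥ 0, the characteristic map Π_t : ℝⁿ → ℝⁿ defined by Π_t(α) = α + t∇Φ(α) is a global C¹ diffeomorphism of ℝⁿ onto itself: it is bijective and its inverse x ↦ α(t,x) is continuously differentiable. -/

import Mathlib

/-- The gradient `∇Φ(x) = (∂Φ/∂x₁, …, ∂Φ/∂xₙ)(x)`. -/
noncomputable def gradFn {n : ℕ} (Φ : (Fin n → ℝ) → ℝ) (x : Fin n → ℝ) : Fin n → ℝ :=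
  fun i => fderiv ℝ Φ x (Pi.single i 1)

/-- The Hessian matrix `Hess Φ(x) = (∂²Φ/∂xᵢ∂xⱼ)(x)`. -/
noncomputable def hessMat {n : ℕ} (Φ : (Fin n → ℝ) → ℝ) (x : Fin n → ℝ) :
    Matrix (Fin n) (Fin n) ℝ :=
  Matrix.of fun i j => iteratedFDeriv ℝ 2 Φ x ![Pi.single i 1, Pi.single j 1]

/-- `u : ℝ → (Fin n → ℝ) → (Fin n → ℝ)` is a global `C^k` solution on `[0,∞) × ℝⁿ` of the
multidimensional Burgers system `∂u/∂t + ∑ⱼ uⱼ ∂u/∂xⱼ = 0` with initial data `φ`. -/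
def IsGlobalSolBurgers (n : ℕ) (φ : (Fin n → ℝ) → (Fin n → ℝ)) (k : ℕ∞)
    (u : ℝ → (Fin n → ℝ) → (Fin n → ℝ)) : Prop :=
  ContDiffOn ℝ k (fun p : ℝ × (Fin n → ℝ) => u p.1 p.2) (Set.Ici 0 ×ˢ Set.univ) ∧
  (∀ x, u 0 x = φ x) ∧
  ∀ t ∈ Set.Ici (0 : ℝ), ∀ x : Fin n → ℝ, ∀ i : Fin n,
    derivWithin (fun s => u s x i) (Set.Ici 0) t
      + ∑ j : Fin n, u t x j * fderiv ℝ (fun y => u t y i) x (Pi.single j 1) = 0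

/-!
For `t ≥ 0` and `Hess Φ ⪰ 0`, the derivative `v ↦ v + t Hess Φ(α) v` of `Π_t` satisfies
`⟨DΠ_t(α) v, v⟩ ≥ |v|²`; integrating along segments gives `⟨Π_t a - Π_t b, a - b⟩ ≥ |a - b|²`.
So `Π_t` is antilipschitz, hence injective and proper, and its range is closed. Every `DΠ_t(α)`
is invertible, so by the inverse function theorem `Π_t` is an open map and its range is open.
Thus `Π_t` is a homeomorphism of `ℝⁿ`, whose inverse is `C¹` again by the inverse function theorem.
-/

open Matrix Function Set

lemma surjective_of_isOpenMap_of_antilipschitzWith {E F : Type*} [MetricSpace E] [ProperSpace E]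
    [Nonempty E] [MetricSpace F] [ProperSpace F] [PreconnectedSpace F] {f : E → F} {K : NNReal}
    (hc : Continuous f) (hK : AntilipschitzWith K f) (ho : IsOpenMap f) : Surjective f := by
  have hproper : IsProperMap f := isProperMap_iff_tendsto_cocompact.2
    ⟨hc, by simpa only [Metric.cobounded_eq_cocompact] using hK.tendsto_cobounded⟩
  have hclopen : IsClopen (range f) := ⟨hproper.isClosedMap.isClosed_range, ho.isOpen_range⟩
  exact range_eq_univ.1 (hclopen.eq_univ (range_nonempty f))

section
variable {ι : Type*} [Fintype ι]

lemma norm_sq_le_dotProduct_self (w : ι → ℝ) : ‖w‖ ^ 2 ≤ w ⬝ᵥ w := by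
  refine (Real.le_sqrt (norm_nonneg w) (dotProduct_self_star_nonneg w)).1 ?_
  refine (pi_norm_le_iff_of_nonneg (Real.sqrt_nonneg _)).2 fun i => Real.abs_le_sqrt ?_
  exact (sq (w i)).trans_le (Finset.single_le_sum (f := fun j => w j * w j)
    (fun j _ => mul_self_nonneg (w j)) (Finset.mem_univ i))

lemma dotProduct_le_card_mul_norm_mul_norm (u w : ι → ℝ) :
    u ⬝ᵥ w ≤ Fintype.card ι * ‖u‖ * ‖w‖ := by
  calc u ⬝ᵥ w ≤ ∑ i, ‖u‖ * ‖w i‖ := Finset.sum_le_sum fun i _ =>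
          (le_abs_self _).trans <| by
            rw [abs_mul]; exact mul_le_mul_of_nonneg_right (norm_le_pi_norm u i) (abs_nonneg _)
    _ = ‖u‖ * ∑ i, ‖w i‖ := by rw [Finset.mul_sum]
    _ ≤ ‖u‖ * (Fintype.card ι * ‖w‖) := by
          gcongr; simpa using Pi.sum_norm_apply_le_norm w
    _ = _ := by ring

lemma norm_le_card_mul_norm_of_dotProduct_self_le {u w : ι → ℝ} (h : w ⬝ᵥ w ≤ u ⬝ᵥ w) :
    ‖w‖ ≤ Fintype.card ι * ‖u‖ := by
  have key : ‖w‖ * ‖w‖ ≤ (Fintype.card ι * ‖u‖) * ‖w‖ := by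
    nlinarith [norm_sq_le_dotProduct_self w, dotProduct_le_card_mul_norm_mul_norm u w]
  rcases (norm_nonneg w).eq_or_lt with h0 | hpos
  · rw [← h0]; positivity
  · exact le_of_mul_le_mul_right key hpos

variable {F : (ι → ℝ) → ι → ℝ}

lemma antilipschitzWith_card_of_dotProduct_sub_le
    (h : ∀ a b, (a - b) ⬝ᵥ (a - b) ≤ (F a - F b) ⬝ᵥ (a - b)) :
    AntilipschitzWith (Fintype.card ι) F :=
  AntilipschitzWith.of_le_mul_dist fun a b => by
    simpa [dist_eq_norm] using norm_le_card_mul_norm_of_dotProduct_self_le (h a b)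

lemma mul_dotProduct_sub_le_of_fderiv (hF : Differentiable ℝ F) {c : ℝ}
    (h : ∀ x v, c * (v ⬝ᵥ v) ≤ fderiv ℝ F x v ⬝ᵥ v) (a b : ι → ℝ) :
    c * ((a - b) ⬝ᵥ (a - b)) ≤ (F a - F b) ⬝ᵥ (a - b) := by
  set w := a - b
  let φ : ℝ → ℝ := fun s => F (b + s • w) ⬝ᵥ w - s * (c * (w ⬝ᵥ w))
  have hφ : ∀ s, HasDerivAt φ (fderiv ℝ F (b + s • w) w ⬝ᵥ w - c * (w ⬝ᵥ w)) s := by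
    intro s
    have hline : HasDerivAt (fun s : ℝ => b + s • w) w s := by
      simpa using ((hasDerivAt_id s).smul_const w).const_add b
    have hFline := hasDerivAt_pi.1 ((hF _).hasFDerivAt.comp_hasDerivAt s hline)
    exact (HasDerivAt.fun_sum fun i _ => (hFline i).mul_const (w i)).sub
      (by simpa using (hasDerivAt_id s).mul_const (c * (w ⬝ᵥ w)))
  have hmono : Monotone φ := monotone_of_deriv_nonneg (fun s => (hφ s).differentiableAt)
    fun s => (hφ s).deriv ▸ sub_nonneg.2 (h _ w)
  have hφ01 := hmono zero_le_one
  have hbw : b + w = a := add_sub_cancel b a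
  simp only [φ, zero_smul, add_zero, one_smul, zero_mul, sub_zero, one_mul, hbw] at hφ01
  rw [sub_dotProduct (F a)]
  linarith

theorem exists_homeomorph_contDiff_symm_of_dotProduct_self_le_fderiv {k : WithTop ℕ∞}
    (hk : k ≠ 0) (hF : ContDiff ℝ k F) (hcoer : ∀ x v, v ⬝ᵥ v ≤ fderiv ℝ F x v ⬝ᵥ v) :
    ∃ e : (ι → ℝ) ≃ₜ (ι → ℝ), ⇑e = F ∧ ContDiff ℝ k e.symm := by
  have hanti : AntilipschitzWith (Fintype.card ι) F :=
    antilipschitzWith_card_of_dotProduct_sub_le <| by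
      simpa using mul_dotProduct_sub_le_of_fderiv (c := 1) (hF.differentiable hk)
        (by simpa using hcoer)
  let F' : (ι → ℝ) → (ι → ℝ) ≃L[ℝ] (ι → ℝ) := fun x =>
    (LinearEquiv.ofInjectiveEndo (fderiv ℝ F x : (ι → ℝ) →ₗ[ℝ] (ι → ℝ))
      (antilipschitzWith_card_of_dotProduct_sub_le fun a b => by
        simpa [← map_sub] using hcoer x (a - b)).injective).toContinuousLinearEquiv
  have hstrict : ∀ x, HasStrictFDerivAt F (F' x : (ι → ℝ) →L[ℝ] (ι → ℝ)) x :=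
    fun x => hF.contDiffAt.hasStrictFDerivAt hk
  have hopen : IsOpenMap F := isOpenMap_of_hasStrictFDerivAt_equiv hstrict
  have hsurj : Surjective F :=
    surjective_of_isOpenMap_of_antilipschitzWith hF.continuous hanti hopen
  let e := (Equiv.ofBijective F ⟨hanti.injective, hsurj⟩).toHomeomorphOfContinuousOpen
    hF.continuous hopen
  exact ⟨e, rfl, e.contDiff_symm (fun x => (hstrict x).hasFDerivAt) hF⟩

end

section
variable {n : ℕ} {Φ : (Fin n → ℝ) → ℝ}

noncomputable def charMap (Φ : (Fin n → ℝ) → ℝ) (t : ℝ) (α : Fin n → ℝ) : Fin n → ℝ :=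
  α + t • gradFn Φ α

lemma contDiff_gradFn {k : WithTop ℕ∞} (hΦ : ContDiff ℝ (k + 1) Φ) : ContDiff ℝ k (gradFn Φ) :=
  contDiff_pi.2 fun _ => (hΦ.fderiv_right le_rfl).clm_apply contDiff_const

lemma contDiff_charMap {k : WithTop ℕ∞} (hΦ : ContDiff ℝ (k + 1) Φ) (t : ℝ) :
    ContDiff ℝ k (charMap Φ t) :=
  contDiff_id.add ((contDiff_gradFn hΦ).const_smul t)

lemma fderiv_gradFn_apply {x : Fin n → ℝ} (h : DifferentiableAt ℝ (fderiv ℝ Φ) x)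
    (v : Fin n → ℝ) : fderiv ℝ (gradFn Φ) x v = v ᵥ* hessMat Φ x := by
  have hD : HasFDerivAt (gradFn Φ) (ContinuousLinearMap.pi fun i =>
      (ContinuousLinearMap.apply ℝ ℝ (Pi.single i 1)).comp (fderiv ℝ (fderiv ℝ Φ) x)) x :=
    hasFDerivAt_pi.2 fun i => by
      exact (ContinuousLinearMap.apply ℝ ℝ (Pi.single i 1)).hasFDerivAt.comp x h.hasFDerivAt
  rw [hD.fderiv]
  ext j
  conv_lhs => rw [pi_eq_sum_univ' v]
  simp [vecMul, dotProduct, hessMat, iteratedFDeriv_two_apply]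

lemma fderiv_charMap_apply (hΦ : ContDiff ℝ 2 Φ) (t : ℝ) (x v : Fin n → ℝ) :
    fderiv ℝ (charMap Φ t) x v = v + t • (v ᵥ* hessMat Φ x) := by
  have hG : DifferentiableAt ℝ (gradFn Φ) x :=
    (contDiff_gradFn (k := 1) hΦ).differentiable one_ne_zero x
  have hchar : HasFDerivAt (charMap Φ t) (.id ℝ _ + t • fderiv ℝ (gradFn Φ) x) x :=
    (hasFDerivAt_id x).add (hG.hasFDerivAt.const_smul t)
  rw [hchar.fderiv]
  simp [fderiv_gradFn_apply ((hΦ.fderiv_right (m := 1) le_rfl).differentiable one_ne_zero x)]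

lemma dotProduct_self_le_fderiv_charMap (hΦ : ContDiff ℝ 2 Φ)
    (hconv : ∀ α, (hessMat Φ α).PosSemidef) {t : ℝ} (ht : 0 ≤ t) (x v : Fin n → ℝ) :
    v ⬝ᵥ v ≤ fderiv ℝ (charMap Φ t) x v ⬝ᵥ v := by
  have hH : 0 ≤ v ⬝ᵥ (hessMat Φ x *ᵥ v) := by simpa using (hconv x).dotProduct_mulVec_nonneg v
  rw [fderiv_charMap_apply hΦ, add_dotProduct, smul_dotProduct, ← dotProduct_mulVec]
  simpa using mul_nonneg ht hH

end

/-- for a `C³` convex `Φ` and each fixed `t ≥ 0`, the characteristic map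
`Π_t(α) = α + t∇Φ(α)` is a global `C¹` diffeomorphism of `ℝⁿ`: it is bijective and
its inverse is continuously differentiable. -/
theorem characteristic_map_global_C1_diffeomorphism
    (n : ℕ) (Φ : (Fin n → ℝ) → ℝ) (hΦ : ContDiff ℝ 3 Φ)
    (hconv : ∀ α : Fin n → ℝ, (hessMat Φ α).PosSemidef) :
    ∀ t ∈ Set.Ici (0 : ℝ),
      Function.Bijective (fun α : Fin n → ℝ => α + t • gradFn Φ α) ∧
      ∃ g : (Fin n → ℝ) → (Fin n → ℝ),
        Function.LeftInverse g (fun α : Fin n → ℝ => α + t • gradFn Φ α) ∧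
        Function.RightInverse g (fun α : Fin n → ℝ => α + t • gradFn Φ α) ∧
        ContDiff ℝ 1 g := by
  intro t ht
  have hΦ2 : ContDiff ℝ 2 Φ := hΦ.of_le (by norm_num)
  obtain ⟨e, he, hsymm⟩ := exists_homeomorph_contDiff_symm_of_dotProduct_self_le_fderiv
    one_ne_zero (contDiff_charMap hΦ2 t) (dotProduct_self_le_fderiv_charMap hΦ2 hconv ht)
  rw [show (fun α : Fin n → ℝ => α + t • gradFn Φ α) = e from he.symm]
  exact ⟨e.bijective, e.symm, e.symm_apply_apply, e.apply_symm_apply, hsymm⟩
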